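/- Let (D, 𝒜, μ) be a measure space such that L₂ = L₂(D, 𝒜, μ) is infinite-dimensional, and let F ⊂ L₂. Then there is an orthonormal system (b_k)_{k∈ℕ₀} in L₂ such that for all m ≥ 1, the orthogonal projection P_m onto span{b_k : k < m} satisfies sup_{f ∈ F} ‖f − P_m f‖_{L₂} ≤ 2 · d_{⌊m/4⌋}(F). -/

import Mathlib

/-!
For every `k` choose `k` functions whose span approximates each `f ∈ F` within `2 d_k(F)`. This
is possible because `d_k` is an infimum; when `d_k(F) = 0` the infimum need not be attained, but
then `F` spans at most `k` dimensions, since linear independence of `k + 1` vectors is an open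
condition. Concatenate these families for `k = 1, 2, 4, …` and orthonormalise them greedily,
padding with unit vectors orthogonal to all earlier ones (they exist as `L₂` is
infinite-dimensional), so that the first `m` vectors of the result span the first `m` vectors of
the concatenation. For `m ≥ 1` the blocks of sizes `1, 2, …, 2^t` fill fewer than
`2^(t+1) ≤ m + 1` places for some `t` with `m / 4 ≤ 2^t`, and the orthogonal projection is the
best approximation from its range, so `‖f - P_m f‖ ≤ 2 d_{2^t}(F) ≤ 2 d_{⌊m/4⌋}(F)`.
-/

open MeasureTheory ENNReal

noncomputable section

/-- Kolmogorov widths of a class `F ⊂ L₂(μ)` in `L₂(μ)`. -/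
def kolW' {D : Type*} [MeasurableSpace D] (μ : Measure D)
    (F : Set (Lp ℂ 2 μ)) (k : ℕ) : ℝ≥0∞ :=
  ⨅ (ℓ : Fin k → Lp ℂ 2 μ → ℂ) (φ : Fin k → Lp ℂ 2 μ),
    ⨆ f ∈ F, (‖f - ∑ i, ℓ i f • φ i‖₊ : ℝ≥0∞)

open Submodule Set Function

theorem exists_seq_of_forall_fin_exists {α : Type*} {Q : ∀ n, (Fin n → α) → α → Prop}
    (h : ∀ n (c : Fin n → α), ∃ x, Q n c x) : ∃ b : ℕ → α, ∀ n, Q n (fun i => b i) (b n) := by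
  choose g hg using h
  refine ⟨fun n => Nat.strongRec (fun n ih => g n fun i => ih i i.2) n, fun n => ?_⟩
  dsimp only
  rw [Nat.strongRec_eq]
  exact hg _ _

theorem exists_subset_span_range_of_forall_not_linearIndependent {K V : Type*} [DivisionRing K]
    [AddCommGroup V] [Module K V] {F : Set V} {k : ℕ}
    (h : ∀ g : Fin (k + 1) → V, range g ⊆ F → ¬LinearIndependent K g) :
    ∃ φ : Fin k → V, F ⊆ span K (range φ) := by
  obtain ⟨s, hsF, hspan, hsli⟩ := exists_linearIndependent K F
  have hnot : ∀ e : Fin (k + 1) → s, ¬Injective e := fun e he =>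
    h _ (range_subset_iff.2 fun i => hsF (e i).2) (hsli.comp e he)
  have hfin : s.Finite := by
    by_contra hinf
    exact hnot _ ((Set.Infinite.natEmbedding s hinf).injective.comp Fin.val_injective)
  have := hfin.fintype
  obtain ⟨e⟩ : Nonempty (s ↪ Fin k) := by
    refine Function.Embedding.nonempty_of_card_le ?_
    by_contra! hlt
    obtain ⟨e⟩ := Function.Embedding.nonempty_of_card_le (α := Fin (k + 1)) (β := s)
      (by simpa using hlt)
    exact hnot e e.injective
  refine ⟨extend e Subtype.val 0, ?_⟩
  calc F ⊆ span K F := subset_span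
    _ = span K s := by rw [hspan]
    _ ⊆ span K (range (extend e Subtype.val 0)) := span_mono fun x hx =>
      ⟨e ⟨x, hx⟩, e.injective.extend_apply _ _ _⟩

section NormedSpace

variable {𝕜 E : Type*} [NontriviallyNormedField 𝕜] [CompleteSpace 𝕜]
  [NormedAddCommGroup E] [NormedSpace 𝕜 E]

theorem not_linearIndependent_of_forall_exists_norm_sub_lt {F : Set E} {k : ℕ}
    (h : ∀ ε > 0, ∃ φ : Fin k → E, ∀ f ∈ F, ∃ w ∈ span 𝕜 (range φ), ‖f - w‖ < ε)
    (g : Fin (k + 1) → E) (hg : range g ⊆ F) : ¬LinearIndependent 𝕜 g := by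
  intro hli
  obtain ⟨ε, hε, hball⟩ := Metric.eventually_nhds_iff.1 hli.eventually
  obtain ⟨φ, hφ⟩ := h ε hε
  choose w hw hgw using fun i => hφ (g i) (hg ⟨i, rfl⟩)
  have hwli : LinearIndependent 𝕜 w :=
    hball ((dist_pi_lt_iff hε).2 fun i => by rw [dist_comm, dist_eq_norm]; exact hgw i)
  have := FiniteDimensional.span_of_finite 𝕜 (finite_range φ)
  have hle := Submodule.finrank_mono (span_le.2 (range_subset_iff.2 hw))
  rw [finrank_span_eq_card hwli, Fintype.card_fin] at hle
  have := hle.trans (finrank_range_le_card (R := 𝕜) φ)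
  rw [Fintype.card_fin] at this
  omega

end NormedSpace

section InnerProductSpace

variable {𝕜 E : Type*} [RCLike 𝕜] [NormedAddCommGroup E] [InnerProductSpace 𝕜 E]

theorem Submodule.norm_sub_starProjection_le (U : Submodule 𝕜 E) [U.HasOrthogonalProjection]
    (y : E) {w : E} (hw : w ∈ U) : ‖y - U.starProjection y‖ ≤ ‖y - w‖ := by
  rw [starProjection_minimal]
  exact ciInf_le ⟨0, by rintro r ⟨x, rfl⟩; positivity⟩ (⟨w, hw⟩ : U)

theorem exists_ne_zero_mem_orthogonal_mem_sup (hE : ¬FiniteDimensional 𝕜 E)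
    (K : Submodule 𝕜 E) [FiniteDimensional 𝕜 K] (v : E) :
    ∃ x ≠ 0, x ∈ Kᗮ ∧ v ∈ K ⊔ 𝕜 ∙ x := by
  by_cases hv : v ∈ K
  · have hK : K ≠ ⊤ := by rintro rfl; exact hE topEquiv.finiteDimensional
    obtain ⟨x, hx, hx0⟩ := exists_mem_ne_zero_of_ne_bot (mt orthogonal_eq_bot_iff.1 hK)
    exact ⟨x, hx0, hx, mem_sup_left hv⟩
  · refine ⟨v - K.starProjection v, sub_ne_zero.2 fun h => hv (h ▸ K.starProjection_apply_mem v),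
      sub_starProjection_mem_orthogonal v, ?_⟩
    simpa using add_mem (mem_sup_left (K.starProjection_apply_mem v))
      (mem_sup_right (mem_span_singleton_self (v - K.starProjection v)))

theorem exists_norm_eq_one_mem_orthogonal_mem_sup (hE : ¬FiniteDimensional 𝕜 E)
    (K : Submodule 𝕜 E) [FiniteDimensional 𝕜 K] (v : E) :
    ∃ x, ‖x‖ = 1 ∧ x ∈ Kᗮ ∧ v ∈ K ⊔ 𝕜 ∙ x := by
  obtain ⟨x, hx0, hxK, hvx⟩ := exists_ne_zero_mem_orthogonal_mem_sup hE K v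
  refine ⟨(‖x‖⁻¹ : 𝕜) • x, norm_smul_inv_norm hx0, smul_mem _ _ hxK, ?_⟩
  have hc : (‖x‖⁻¹ : 𝕜) ≠ 0 := inv_ne_zero (RCLike.ofReal_ne_zero.2 (norm_ne_zero_iff.2 hx0))
  rwa [span_singleton_smul_eq hc.isUnit]

theorem exists_orthonormal_span_image_Iio_le (hE : ¬FiniteDimensional 𝕜 E) (v : ℕ → E) :
    ∃ b : ℕ → E, Orthonormal 𝕜 b ∧ ∀ m, span 𝕜 (v '' Iio m) ≤ span 𝕜 (b '' Iio m) := by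
  have hrange : ∀ (b : ℕ → E) n, range (fun i : Fin n => b i) = b '' Iio n := by
    intro b n; ext; simp [Fin.exists_iff]
  obtain ⟨b, hb⟩ := exists_seq_of_forall_fin_exists (Q := fun n c x =>
      ‖x‖ = 1 ∧ x ∈ (span 𝕜 (range c))ᗮ ∧ v n ∈ span 𝕜 (range c) ⊔ 𝕜 ∙ x)
    fun n c =>
      have := FiniteDimensional.span_of_finite 𝕜 (finite_range c)
      exists_norm_eq_one_mem_orthogonal_mem_sup hE _ (v n)
  simp only [hrange] at hb
  have horth : ∀ i j, i < j → inner 𝕜 (b i) (b j) = 0 := fun i j hij =>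
    (mem_orthogonal _ _).1 (hb j).2.1 _ (subset_span ⟨i, hij, rfl⟩)
  refine ⟨b, ⟨fun n => (hb n).1, fun i j hij => ?_⟩, fun m => span_le.2 ?_⟩
  · rcases hij.lt_or_gt with h | h
    · exact horth i j h
    · exact inner_eq_zero_symm.1 (horth j i h)
  · rintro _ ⟨n, hn, rfl⟩
    have hle : span 𝕜 (b '' Iio n) ⊔ 𝕜 ∙ b n ≤ span 𝕜 (b '' Iio m) :=
      sup_le (span_mono (image_mono (Iio_subset_Iio hn.le)))
        ((span_singleton_le_iff_mem _ _).2 (subset_span ⟨n, hn, rfl⟩))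
    exact hle (hb n).2.2

end InnerProductSpace

section KolmogorovWidth

variable {D : Type*} [MeasurableSpace D] {μ : Measure D} {F : Set (Lp ℂ 2 μ)}

theorem kolW'_antitone (μ : Measure D) (F : Set (Lp ℂ 2 μ)) : Antitone (kolW' μ F) := by
  intro k k' hk
  refine le_iInf₂ fun ℓ φ => ?_
  have he : Injective (Fin.castLE hk) := Fin.castLE_injective hk
  have hsum : ∀ f, ∑ i, extend (Fin.castLE hk) (ℓ · f) 0 i • extend (Fin.castLE hk) φ 0 i =
      ∑ i, ℓ i f • φ i := fun f =>
    (Fintype.sum_of_injective _ he _ _ (fun i hi => by simp [extend_apply' _ _ _ hi])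
      fun i => by simp only [he.extend_apply]).symm
  refine (iInf₂_le (fun i f => extend (Fin.castLE hk) (ℓ · f) 0 i)
    (extend (Fin.castLE hk) φ 0)).trans_eq ?_
  simp only [hsum]

theorem exists_span_approx_of_kolW'_lt {k : ℕ} {r : ℝ≥0∞} (h : kolW' μ F k < r) :
    ∃ φ : Fin k → Lp ℂ 2 μ, ∀ f ∈ F, ∃ w ∈ span ℂ (range φ), (‖f - w‖₊ : ℝ≥0∞) < r := by
  obtain ⟨ℓ, φ, hφ⟩ : ∃ (ℓ : Fin k → Lp ℂ 2 μ → ℂ) (φ : Fin k → Lp ℂ 2 μ),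
      ⨆ f ∈ F, (‖f - ∑ i, ℓ i f • φ i‖₊ : ℝ≥0∞) < r := by
    simpa [kolW', iInf_lt_iff] using h
  exact ⟨φ, fun f hf => ⟨_, sum_mem fun i _ => smul_mem _ _ (subset_span ⟨i, rfl⟩),
    (le_iSup₂ (f := fun f (_ : f ∈ F) => (‖f - ∑ i, ℓ i f • φ i‖₊ : ℝ≥0∞)) f hf).trans_lt hφ⟩⟩

theorem exists_span_approx_kolW' (μ : Measure D) (F : Set (Lp ℂ 2 μ)) (k : ℕ) :
    ∃ φ : Fin k → Lp ℂ 2 μ, ∀ f ∈ F, ∃ w ∈ span ℂ (range φ),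
      (‖f - w‖₊ : ℝ≥0∞) ≤ 2 * kolW' μ F k := by
  rcases eq_or_ne (kolW' μ F k) 0 with h0 | h0
  · have happrox : ∀ ε > 0, ∃ φ : Fin k → Lp ℂ 2 μ, ∀ f ∈ F,
        ∃ w ∈ span ℂ (range φ), ‖f - w‖ < ε := fun ε hε => by
      obtain ⟨φ, hφ⟩ := exists_span_approx_of_kolW'_lt (μ := μ) (F := F) (r := .ofReal ε)
        (by rw [h0]; exact ENNReal.ofReal_pos.2 hε)
      refine ⟨φ, fun f hf => ?_⟩
      obtain ⟨w, hw, hfw⟩ := hφ f hf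
      rw [← enorm_eq_nnnorm, ← ofReal_norm, ENNReal.ofReal_lt_ofReal_iff hε] at hfw
      exact ⟨w, hw, hfw⟩
    obtain ⟨φ, hφ⟩ := exists_subset_span_range_of_forall_not_linearIndependent
      (not_linearIndependent_of_forall_exists_norm_sub_lt happrox)
    exact ⟨φ, fun f hf => ⟨f, hφ hf, by simp⟩⟩
  rcases eq_or_ne (kolW' μ F k) ⊤ with htop | htop
  · exact ⟨0, fun f _ => ⟨0, zero_mem _, by simp [htop]⟩⟩
  obtain ⟨φ, hφ⟩ := exists_span_approx_of_kolW'_lt (μ := μ) (F := F) (r := 2 * kolW' μ F k)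
    (by rw [two_mul]; exact ENNReal.lt_add_right htop h0)
  exact ⟨φ, fun f hf => (hφ f hf).imp fun w ⟨hw, hfw⟩ => ⟨hw, hfw.le⟩⟩

end KolmogorovWidth

def dyadicConcat {α : Type*} (ψ : ∀ t : ℕ, Fin (2 ^ t) → α) (n : ℕ) : α :=
  ψ (Nat.log 2 (n + 1)) ⟨n + 1 - 2 ^ Nat.log 2 (n + 1), by
    have h₁ := Nat.pow_log_le_self 2 n.succ_ne_zero
    have h₂ := Nat.lt_pow_succ_log_self one_lt_two (n + 1)
    rw [pow_succ] at h₂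
    omega⟩

theorem dyadicConcat_apply {α : Type*} (ψ : ∀ t : ℕ, Fin (2 ^ t) → α) (t : ℕ) (r : Fin (2 ^ t)) :
    dyadicConcat ψ (2 ^ t - 1 + r) = ψ t r := by
  have hpos := Nat.one_le_two_pow (n := t)
  have hlog : Nat.log 2 (2 ^ t - 1 + r + 1) = t :=
    Nat.log_eq_of_pow_le_of_lt_pow (by omega) (by rw [pow_succ]; omega)
  have key : ∀ s (hs : s = t) (i : Fin (2 ^ s)), (i : ℕ) = r → ψ s i = ψ t r := by
    rintro s rfl i hi
    rw [Fin.ext hi]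
  exact key _ hlog _ (by simp only [hlog]; omega)

theorem range_subset_dyadicConcat_image_Iio {α : Type*} (ψ : ∀ t : ℕ, Fin (2 ^ t) → α)
    (t : ℕ) : range (ψ t) ⊆ dyadicConcat ψ '' Iio (2 ^ (t + 1) - 1) := by
  rintro _ ⟨r, rfl⟩
  refine ⟨2 ^ t - 1 + r, ?_, dyadicConcat_apply ψ t r⟩
  have := r.2
  rw [mem_Iio, pow_succ]
  omega

theorem exists_div_four_le_two_pow {m : ℕ} (hm : 1 ≤ m) :
    ∃ t, m / 4 ≤ 2 ^ t ∧ 2 ^ (t + 1) - 1 ≤ m := by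
  have h₁ : 2 ^ Nat.log 2 (m + 1) ≤ m + 1 := Nat.pow_log_le_self 2 m.succ_ne_zero
  have h₂ : m + 1 < 2 ^ (Nat.log 2 (m + 1) + 1) := Nat.lt_pow_succ_log_self one_lt_two (m + 1)
  have hs : 1 ≤ Nat.log 2 (m + 1) := Nat.le_log_of_pow_le one_lt_two (by omega)
  obtain ⟨t, ht⟩ : ∃ t, Nat.log 2 (m + 1) = t + 1 := ⟨_, (Nat.sub_add_cancel hs).symm⟩
  rw [ht, pow_succ 2 (t + 1), pow_succ 2 t] at h₂
  rw [ht] at h₁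
  exact ⟨t, by omega, by omega⟩

open scoped Classical in
theorem statement13 (D : Type*) [MeasurableSpace D] (μ : Measure D)
    (hinf : ¬ FiniteDimensional ℂ (Lp ℂ 2 μ))
    (F : Set (Lp ℂ 2 μ)) :
    ∃ b : ℕ → Lp ℂ 2 μ, Orthonormal ℂ b ∧
      ∀ m : ℕ, 1 ≤ m →
        ⨆ f ∈ F,
          (‖f - (Submodule.orthogonalProjection
              (Submodule.span ℂ ((Finset.image b (Finset.range m) : Finset (Lp ℂ 2 μ)) : Set (Lp ℂ 2 μ))) f :
            Lp ℂ 2 μ)‖₊ : ℝ≥0∞) ≤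
          2 * kolW' μ F (m / 4) := by
  choose φ hφ using exists_span_approx_kolW' μ F
  set v := dyadicConcat fun t => φ (2 ^ t)
  obtain ⟨b, hb, hvb⟩ := exists_orthonormal_span_image_Iio_le hinf v
  refine ⟨b, hb, fun m hm => iSup₂_le fun f hf => ?_⟩
  obtain ⟨t, hjt, htm⟩ := exists_div_four_le_two_pow hm
  obtain ⟨w, hw, hfw⟩ := hφ (2 ^ t) f hf
  have hspan : span ℂ (range (φ (2 ^ t))) ≤
      span ℂ ((Finset.image b (Finset.range m) : Finset _) : Set (Lp ℂ 2 μ)) :=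
    calc span ℂ (range (φ (2 ^ t))) ≤ span ℂ (v '' Iio (2 ^ (t + 1) - 1)) :=
          span_mono (range_subset_dyadicConcat_image_Iio (fun t => φ (2 ^ t)) t)
      _ ≤ span ℂ (v '' Iio m) := span_mono (image_mono (Iio_subset_Iio htm))
      _ ≤ span ℂ (b '' Iio m) := hvb m
      _ = _ := by rw [Finset.coe_image, Finset.coe_range]
  calc _ ≤ (‖f - w‖₊ : ℝ≥0∞) := by
        rw [← starProjection_apply]
        exact ENNReal.coe_le_coe.2 (norm_sub_starProjection_le _ f (hspan hw))
    _ ≤ 2 * kolW' μ F (2 ^ t) := hfw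
    _ ≤ 2 * kolW' μ F (m / 4) := by gcongr; exact kolW'_antitone μ F hjt

end
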